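/- Let Γ be a graph in which no vertex subset W satisfies simultaneously: (1) W is independent, (2) there exist two distinct vertices of W both dominating a third vertex of W, (4) every vertex of W divides W trivially, (5) W is closed under domination lower bounds. Then for every domination chain v₁ ≥ v₂ ≥ v₃ of length 3 in Γ, the set U(v₁) of vertices dominating v₁ is a clique, and v₁ dominates some vertex adjacent to it. -/

import Mathlib

/-- `v` dominates `w` in the graph `G`: the link of `w` is contained in the star of `v`. -/
def SimpleGraph.Dominates {V : Type*} (G : SimpleGraph V) (v w : V) : Prop :=
  ∀ u : V, G.Adj u w → (G.Adj u v ∨ u = v)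

/-- The star of a vertex `v`: its neighbors together with `v` itself. -/
def SimpleGraph.star {V : Type*} (G : SimpleGraph V) (v : V) : Set V :=
  {u : V | G.Adj v u ∨ u = v}

/-- `v` divides the set `W` trivially: `W − L(v)` lies in a single connected component of
`Γ − st(v)` (the subgraph induced on the complement of the star of `v`). -/
def SimpleGraph.DividesTrivially {V : Type*} (G : SimpleGraph V) (v : V) (W : Set V) :
    Prop :=
  ∃ C : (SimpleGraph.induce (G.star v)ᶜ G).ConnectedComponent,
    ∀ w ∈ W, ¬ G.Dominates v w →
      ∃ hw : w ∈ (G.star v)ᶜ,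
        (SimpleGraph.induce (G.star v)ᶜ G).connectedComponentMk ⟨w, hw⟩ = C

/-
A vertex `v` that dominates none of its neighbours would make its lower set `L(v)` a forbidden
set `W`: any edge inside `L(v)` would meet `st(v)`, and for `w ∈ L(v) − {v}` every `y ∈ L(v)`
not dominated by `w` is joined to `v` in `Γ − st(w)` through a neighbour of `y` outside `st(w)`.
Hence `v₁` dominates a neighbour `u`, which puts every vertex dominating `v₁` into `st(v₁)`,
and two vertices of `U(v₁)` are then adjacent through `v₁`.
-/

namespace SimpleGraph

variable {V : Type*} {G : SimpleGraph V} {a u v w x y : V}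

/-- Conditions (1), (2), (4) and (5) of the statement. -/
def IsObstructingSet (G : SimpleGraph V) (W : Set V) : Prop :=
  (W.Pairwise fun a b => ¬ G.Adj a b) ∧
  (∃ a ∈ W, ∃ b ∈ W, ∃ c ∈ W, a ≠ b ∧ a ≠ c ∧ b ≠ c ∧
    G.Dominates a c ∧ G.Dominates b c) ∧
  (∀ v ∈ W, G.DividesTrivially v W) ∧
  (∀ a b : V, b ∈ W → G.Dominates b a → a ∈ W)

@[simp]
lemma mem_star : u ∈ G.star v ↔ G.Adj v u ∨ u = v := Iff.rfl

lemma mem_star_comm : u ∈ G.star v ↔ v ∈ G.star u := by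
  simp only [mem_star, G.adj_comm, eq_comm]

@[refl]
lemma Dominates.refl (v : V) : G.Dominates v v := fun _ hu => Or.inl hu

lemma Dominates.mem_star (hvy : G.Dominates v y) (huy : G.Adj u y) : u ∈ G.star v :=
  (hvy u huy).imp_left G.adj_symm

lemma Dominates.trans (hxy : G.Dominates x y) (hxz : x ≠ z) (hyz : G.Dominates y z) :
    G.Dominates x z := by
  intro u huz
  rcases hyz u huz with huy | rfl
  · exact hxy u huy
  · rcases hxy z huz.symm with hzx | rfl
    · exact (hyz x hzx.symm).imp G.adj_symm Eq.symm
    · exact absurd rfl hxz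

lemma Dominates.not_mem_star (hv : ∀ u, G.Dominates v u → ¬ G.Adj v u)
    (hx : G.Dominates v x) (hxv : x ≠ v) : x ∉ G.star v := by
  rintro (hvx | rfl)
  exacts [hv x hx hvx, hxv rfl]

lemma Dominates.mem_star_of_adj (hav : G.Dominates a v) (hvu : G.Dominates v u)
    (hadj : G.Adj v u) : a ∈ G.star v := by
  rcases hav.mem_star hadj.symm with hau | rfl
  · exact hvu.mem_star hau
  · exact Or.inl hadj

lemma isClique_setOf_dominates (hvu : G.Dominates v u) (hadj : G.Adj v u) :
    G.IsClique {a | G.Dominates a v} := by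
  intro a ha b hb hab
  rcases ha.mem_star_of_adj hvu hadj with hva | rfl
  · exact (hb a hva.symm).resolve_right hab
  · exact (hb.mem_star_of_adj hvu hadj).resolve_right hab.symm

lemma pairwise_not_adj_setOf_dominates (hv : ∀ u, G.Dominates v u → ¬ G.Adj v u) :
    {x | G.Dominates v x}.Pairwise fun a b => ¬ G.Adj a b := by
  intro a ha b hb _ hab
  rcases hb a hab with hav | rfl
  exacts [hv a ha hav.symm, hv b hb hab]

lemma dividesTrivially_of_reachable {W : Set V} (c : V) (hc : c ∉ G.star v)
    (hW : ∀ w ∈ W, ¬ G.Dominates v w → ∃ hw : w ∉ G.star v,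
      (G.induce (G.star v)ᶜ).Reachable ⟨w, hw⟩ ⟨c, hc⟩) :
    G.DividesTrivially v W :=
  ⟨(G.induce (G.star v)ᶜ).connectedComponentMk ⟨c, hc⟩, fun w hw hvw =>
    let ⟨hw', hr⟩ := hW w hw hvw
    ⟨hw', ConnectedComponent.sound hr⟩⟩

lemma dividesTrivially_setOf_dominates (hv : ∀ u, G.Dominates v u → ¬ G.Adj v u)
    (hx : G.Dominates v x) (hxv : x ≠ v) (hw : G.Dominates v w) :
    G.DividesTrivially w {y | G.Dominates v y} := by
  rcases eq_or_ne w v with rfl | hwv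
  · exact dividesTrivially_of_reachable x (hx.not_mem_star hv hxv) fun y hy hwy => absurd hy hwy
  have hvw : v ∉ G.star w := fun h => hw.not_mem_star hv hwv (mem_star_comm.mp h)
  refine dividesTrivially_of_reachable v hvw fun y (hy : G.Dominates v y) hwy => ?_
  obtain ⟨u, huy, huw⟩ : ∃ u, G.Adj u y ∧ u ∉ G.star w := by
    simpa only [Dominates, not_forall, exists_prop, mem_star, G.adj_comm w] using hwy
  have hyw : y ∉ G.star w := by
    rintro (hwy' | rfl)
    · exact hvw (mem_star_comm.mp (hy.mem_star hwy'))
    · exact hwy (.refl y)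
  have huv : G.Adj u v := (hy u huy).resolve_right (by rintro rfl; exact hv y hy huy)
  refine ⟨hyw, ?_⟩
  have hyu : (G.induce (G.star w)ᶜ).Adj ⟨y, hyw⟩ ⟨u, huw⟩ := huy.symm
  have huv' : (G.induce (G.star w)ᶜ).Adj ⟨u, huw⟩ ⟨v, hvw⟩ := huv
  exact hyu.reachable.trans huv'.reachable

lemma isObstructingSet_setOf_dominates (hv : ∀ u, G.Dominates v u → ¬ G.Adj v u)
    (h12 : v ≠ x) (h13 : v ≠ y) (h23 : x ≠ y)
    (hvx : G.Dominates v x) (hxy : G.Dominates x y) :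
    G.IsObstructingSet {z | G.Dominates v z} := by
  have hvy : G.Dominates v y := hvx.trans h13 hxy
  refine ⟨pairwise_not_adj_setOf_dominates hv,
    ⟨v, .refl v, x, hvx, y, hvy, h12, h13, h23, hvy, hxy⟩,
    fun w hw => dividesTrivially_setOf_dominates hv hvx h12.symm hw, fun a b hb hba => ?_⟩
  rcases eq_or_ne v a with rfl | hva
  exacts [.refl v, hb.trans hva hba]

lemma exists_dominates_adj_of_chain (h : ¬ ∃ W, G.IsObstructingSet W)
    (h12 : v ≠ x) (h13 : v ≠ y) (h23 : x ≠ y)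
    (hvx : G.Dominates v x) (hxy : G.Dominates x y) :
    ∃ u, G.Dominates v u ∧ G.Adj v u := by
  by_contra! hv
  exact h ⟨_, isObstructingSet_setOf_dominates hv h12 h13 h23 hvx hxy⟩

end SimpleGraph

theorem exceptional_graphs_general (V : Type*) (G : SimpleGraph V)
    (h : ¬ ∃ W : Set V,
      (W.Pairwise fun a b => ¬ G.Adj a b) ∧
      (∃ a ∈ W, ∃ b ∈ W, ∃ c ∈ W, a ≠ b ∧ a ≠ c ∧ b ≠ c ∧
        G.Dominates a c ∧ G.Dominates b c) ∧
      (∀ v ∈ W, G.DividesTrivially v W) ∧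
      (∀ a b : V, b ∈ W → G.Dominates b a → a ∈ W))
    (v₁ v₂ v₃ : V) (h12 : v₁ ≠ v₂) (h13 : v₁ ≠ v₃) (h23 : v₂ ≠ v₃)
    (d12 : G.Dominates v₁ v₂) (d23 : G.Dominates v₂ v₃) :
    G.IsClique {u : V | G.Dominates u v₁} ∧ ∃ u : V, G.Dominates v₁ u ∧ G.Adj v₁ u := by
  obtain ⟨u, hu, hadj⟩ := SimpleGraph.exists_dominates_adj_of_chain h h12 h13 h23 d12 d23
  exact ⟨SimpleGraph.isClique_setOf_dominates hu hadj, u, hu, hadj⟩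

/-- Suppose no vertex subset `W` of `Γ` simultaneously satisfies: (1) `W` is independent,
(2) two distinct vertices of `W` both dominate a third vertex of `W`, (4) every vertex of
`W` divides `W` trivially, and (5) `W` is closed under domination lower bounds.  Then for
every domination chain `v₁ ≥ v₂ ≥ v₃` of length 3, the set `U(v₁)` of vertices dominating
`v₁` is a clique, and `v₁` dominates some vertex adjacent to it. -/
theorem exceptional_graphs (V : Type*) [Fintype V] (G : SimpleGraph V)
    (h : ¬ ∃ W : Set V,
      (W.Pairwise fun a b => ¬ G.Adj a b) ∧
      (∃ a ∈ W, ∃ b ∈ W, ∃ c ∈ W, a ≠ b ∧ a ≠ c ∧ b ≠ c ∧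
        G.Dominates a c ∧ G.Dominates b c) ∧
      (∀ v ∈ W, G.DividesTrivially v W) ∧
      (∀ a b : V, b ∈ W → G.Dominates b a → a ∈ W))
    (v₁ v₂ v₃ : V) (h12 : v₁ ≠ v₂) (h13 : v₁ ≠ v₃) (h23 : v₂ ≠ v₃)
    (d12 : G.Dominates v₁ v₂) (d23 : G.Dominates v₂ v₃) :
    G.IsClique {u : V | G.Dominates u v₁} ∧ ∃ u : V, G.Dominates v₁ u ∧ G.Adj v₁ u :=
  exceptional_graphs_general V G h v₁ v₂ v₃ h12 h13 h23 d12 d23
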